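/- The relation δ : {1,2,3,4} → {1,2,3,4} × {1,2,3,4} given by 1 ↦ {(1,1),(2,2)}, 2 ↦ {(1,2),(2,1)}, 3 ↦ {(3,3),(4,4)}, 4 ↦ {(3,4),(4,3)} is coassociative: (δ × id) ∘ δ = (id × δ) ∘ δ as relations from {1,2,3,4} to {1,2,3,4}³, and cocommutative: swap ∘ δ = δ. -/
import Mathlib


/-- Relational composition: first `R`, then `S`. -/
def relComp {A B C : Type*} (R : A → B → Prop) (S : B → C → Prop) : A → C → Prop :=
  fun a c => ∃ b, R a b ∧ S b c

/-- Product of relations. -/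
def relProd {A B C D : Type*} (R : A → B → Prop) (S : C → D → Prop) :
    A × C → B × D → Prop :=
  fun p q => R p.1 q.1 ∧ S p.2 q.2

/-- Identity relation. -/
def relId {A : Type*} : A → A → Prop := Eq

/-- The swap relation on B × B. -/
def relSwap {B : Type*} : B × B → B × B → Prop := fun p q => q = (p.2, p.1)

/-- The associator relation ((x,y),z) ↦ (x,(y,z)) identifying ({1,2,3,4}²)×{1,2,3,4}
with {1,2,3,4}³. -/
def relAssoc {A : Type*} : (A × A) × A → A × (A × A) → Prop :=
  fun p q => q = (p.1.1, (p.1.2, p.2))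

/-- Spekkens's comultiplication relation on the four-element phase space
(elements 0,1,2,3 standing for 1,2,3,4):
1 ↦ {(1,1),(2,2)}, 2 ↦ {(1,2),(2,1)}, 3 ↦ {(3,3),(4,4)}, 4 ↦ {(3,4),(4,3)}. -/
def spekDelta : Fin 4 → Fin 4 × Fin 4 → Prop := fun a p =>
  (a = 0 ∧ (p = (0, 0) ∨ p = (1, 1))) ∨
  (a = 1 ∧ (p = (0, 1) ∨ p = (1, 0))) ∨
  (a = 2 ∧ (p = (2, 2) ∨ p = (3, 3))) ∨
  (a = 3 ∧ (p = (2, 3) ∨ p = (3, 2)))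

/-- spekDelta is coassociative and cocommutative. -/
theorem stmt_17 :
    relComp (relComp spekDelta (relProd spekDelta relId)) relAssoc =
      relComp spekDelta (relProd relId spekDelta) ∧
    relComp spekDelta relSwap = spekDelta := by
  constructor
  · funext a c
    apply propext
    simp only [relComp, relProd, relId, relAssoc, spekDelta]
    revert a c
    set_option synthInstance.maxSize 10000 in
    set_option maxHeartbeats 4000000 in
    set_option maxRecDepth 10000 in
    decide
  · funext a c
    apply propext
    simp only [relComp, relSwap, spekDelta]
    revert a c
    set_option synthInstance.maxSize 10000 in
    set_option maxHeartbeats 4000000 in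
    set_option maxRecDepth 10000 in
    decide
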